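/- Let Φ be a finite crystallographic root system, w ∈ W(Φ) separable, and w₀ the longest element of W(Φ). Then w₀·w is also separable. -/

import Mathlib

open scoped Classical
open Polynomial
noncomputable section

/-- The ambient Euclidean space `ℝⁿ`. -/
abbrev Esp (n : ℕ) : Type := EuclideanSpace ℝ (Fin n)

/-- The orthogonal reflection in the hyperplane orthogonal to the vector `α`. -/
def rootReflection {n : ℕ} (α : Esp n) : Esp n ≃ₗᵢ[ℝ] Esp n :=
  Submodule.reflection ((ℝ ∙ α)ᗮ)

/-- A finite crystallographic reduced root system in `ℝⁿ`, together with a chosen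
system of positive roots.  (The root system is not required to span `ℝⁿ`, so that
subsystems of a root system are again root systems in the same ambient space.) -/
structure RootSys (n : ℕ) where
  roots : Finset (Esp n)
  pos : Finset (Esp n)
  ne_zero : ∀ α ∈ roots, α ≠ (0 : Esp n)
  neg_mem : ∀ α ∈ roots, -α ∈ roots
  reduced : ∀ α ∈ roots, ∀ t : ℝ, t • α ∈ roots → t = 1 ∨ t = -1
  reflect_mem : ∀ α ∈ roots, ∀ β ∈ roots, rootReflection α β ∈ roots
  crystal : ∀ α ∈ roots, ∀ β ∈ roots, ∃ k : ℤ, 2 * (inner ℝ α β : ℝ) / (inner ℝ α α : ℝ) = (k : ℝ)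
  pos_subset : pos ⊆ roots
  pos_iff : ∀ α ∈ roots, (α ∈ pos ↔ -α ∉ pos)
  pos_add : ∀ α ∈ pos, ∀ β ∈ pos, α + β ∈ roots → α + β ∈ pos

namespace RootSys

variable {n : ℕ}

/-- The Weyl group of a root system: the subgroup of the linear isometries of `ℝⁿ`
generated by the reflections in the roots. -/
def weylGroup (Φ : RootSys n) : Subgroup (Esp n ≃ₗᵢ[ℝ] Esp n) :=
  Subgroup.closure {g | ∃ α ∈ Φ.roots, g = rootReflection α}

/-- The inversion set `I_Φ(w) = {α ∈ Φ⁺ : w α ∈ -Φ⁺}`. -/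
def invSet (Φ : RootSys n) (w : Esp n ≃ₗᵢ[ℝ] Esp n) : Finset (Esp n) :=
  Φ.pos.filter fun α => -(w α) ∈ Φ.pos

/-- The length of a Weyl group element, `ℓ(w) = |I_Φ(w)|`. -/
def len (Φ : RootSys n) (w : Esp n ≃ₗᵢ[ℝ] Esp n) : ℕ :=
  (Φ.invSet w).card

/-- The simple roots: the indecomposable positive roots. -/
def simples (Φ : RootSys n) : Finset (Esp n) :=
  Φ.pos.filter fun α => ¬ ∃ β ∈ Φ.pos, ∃ γ ∈ Φ.pos, α = β + γ

/-- The root poset order: `α ≤ β` iff `β - α` is a nonnegative linear combination of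
the simple roots. -/
def rootLE (Φ : RootSys n) (α β : Esp n) : Prop :=
  ∃ c : Esp n → ℝ, (∀ γ, 0 ≤ c γ) ∧ β - α = ∑ γ ∈ Φ.simples, c γ • γ

/-- The positive roots `β` with `β ≥ α` in the root poset order. -/
def upperRoots (Φ : RootSys n) (α : Esp n) : Finset (Esp n) :=
  Φ.pos.filter fun β => Φ.rootLE α β

/-- `Φ'` is the parabolic root subsystem of `Φ` generated by the subset `Δ'` of the
simple roots. -/
def IsParabolic (Φ Φ' : RootSys n) (Δ' : Finset (Esp n)) : Prop :=
  Φ'.roots = Φ.roots.filter (fun β => β ∈ Submodule.span ℝ (Δ' : Set (Esp n))) ∧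
  Φ'.pos = Φ.pos.filter (fun β => β ∈ Submodule.span ℝ (Δ' : Set (Esp n)))

/-- `u` is the restriction `w|_{Φ'}` of `w` to the subsystem `Φ'` of `Φ`: the unique
element of `W(Φ')` with `I_{Φ'}(u) = I_Φ(w) ∩ (Φ')⁺`. -/
def IsRestriction (Φ' : RootSys n) (u : Esp n ≃ₗᵢ[ℝ] Esp n)
    (Φ : RootSys n) (w : Esp n ≃ₗᵢ[ℝ] Esp n) : Prop :=
  u ∈ Φ'.weylGroup ∧ Φ'.invSet u = Φ.invSet w ∩ Φ'.pos

/-- A decomposition of `Φ` as an orthogonal direct sum of two nonempty subsystems. -/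
def IsOrthDecomp (Φ Φ₁ Φ₂ : RootSys n) : Prop :=
  Φ₁.roots.Nonempty ∧ Φ₂.roots.Nonempty ∧
  (∀ α ∈ Φ₁.roots, ∀ β ∈ Φ₂.roots, (inner ℝ α β : ℝ) = 0) ∧
  Φ.roots = Φ₁.roots ∪ Φ₂.roots ∧ Φ.pos = Φ₁.pos ∪ Φ₂.pos

/-- Irreducibility of a (nonempty) root system. -/
def IsIrreducible (Φ : RootSys n) : Prop :=
  Φ.roots.Nonempty ∧ ¬ ∃ Φ₁ Φ₂ : RootSys n, Φ.IsOrthDecomp Φ₁ Φ₂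

/-- `w₀` is the longest element of `W(Φ)`: the element whose inversion set is all of `Φ⁺`. -/
def IsLongest (Φ : RootSys n) (w₀ : Esp n ≃ₗᵢ[ℝ] Esp n) : Prop :=
  w₀ ∈ Φ.weylGroup ∧ Φ.invSet w₀ = Φ.pos

end RootSys

/-- Separable elements of a Weyl group (Definition 3.1 of the paper):
`w` is separable if `Φ` has rank one; or `Φ` is reducible and the restriction of `w`
to each part of an orthogonal decomposition is separable; or `Φ` is irreducible and
there is a pivot `α ∈ Δ` such that the restriction of `w` to the parabolic subsystem
generated by `Δ ∖ {α}` is separable and `{β ∈ Φ⁺ : β ≥ α}` is contained in or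
disjoint from `I_Φ(w)`. -/
inductive Separable : {n : ℕ} → (Φ : RootSys n) → (Esp n ≃ₗᵢ[ℝ] Esp n) → Prop where
  | rank_one {n : ℕ} (Φ : RootSys n) (w : Esp n ≃ₗᵢ[ℝ] Esp n)
      (hw : w ∈ Φ.weylGroup) (hrk : ∃ α, Φ.pos = {α}) : Separable Φ w
  | reducible {n : ℕ} (Φ Φ₁ Φ₂ : RootSys n) (w u₁ u₂ : Esp n ≃ₗᵢ[ℝ] Esp n)
      (hw : w ∈ Φ.weylGroup) (hd : Φ.IsOrthDecomp Φ₁ Φ₂)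
      (h₁ : Φ₁.IsRestriction u₁ Φ w) (h₂ : Φ₂.IsRestriction u₂ Φ w)
      (s₁ : Separable Φ₁ u₁) (s₂ : Separable Φ₂ u₂) : Separable Φ w
  | pivot {n : ℕ} (Φ Φ' : RootSys n) (w u : Esp n ≃ₗᵢ[ℝ] Esp n) (α : Esp n)
      (hw : w ∈ Φ.weylGroup) (hirr : Φ.IsIrreducible) (hα : α ∈ Φ.simples)
      (hpar : Φ.IsParabolic Φ' (Φ.simples \ {α}))
      (hres : Φ'.IsRestriction u Φ w) (hsep : Separable Φ' u)
      (hcond : Φ.upperRoots α ⊆ Φ.invSet w ∨ ∀ β ∈ Φ.upperRoots α, β ∉ Φ.invSet w) :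
      Separable Φ w

/-- The rank generating polynomial `∑_{i=0}^{N} a_i qⁱ` of a sequence of coefficients. -/
def genPoly (a : ℕ → ℕ) (N : ℕ) : Polynomial ℤ :=
  ∑ i ∈ Finset.range (N + 1), Polynomial.C (a i : ℤ) * Polynomial.X ^ i

/-- A sequence is unimodal (weakly increases, then weakly decreases). -/
def UnimodalSeq (a : ℕ → ℕ) : Prop :=
  ∃ m : ℕ, (∀ i j, i ≤ j → j ≤ m → a i ≤ a j) ∧ (∀ i j, m ≤ i → i ≤ j → a j ≤ a i)

namespace RootSys

variable {n : ℕ}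

/-- The size of the `i`-th rank of the lower order ideal `Λ_w` in left weak order. -/
def lowerRankSize (Φ : RootSys n) (w : Esp n ≃ₗᵢ[ℝ] Esp n) (i : ℕ) : ℕ :=
  Set.ncard {u : Esp n ≃ₗᵢ[ℝ] Esp n |
    u ∈ Φ.weylGroup ∧ Φ.invSet u ⊆ Φ.invSet w ∧ Φ.len u = i}

/-- The size of the `i`-th rank of the upper order ideal `V_w` in left weak order
(graded by `ℓ(u) - ℓ(w)`). -/
def upperRankSize (Φ : RootSys n) (w : Esp n ≃ₗᵢ[ℝ] Esp n) (i : ℕ) : ℕ :=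
  Set.ncard {u : Esp n ≃ₗᵢ[ℝ] Esp n |
    u ∈ Φ.weylGroup ∧ Φ.invSet w ⊆ Φ.invSet u ∧ Φ.len u = Φ.len w + i}

/-- The number of elements of the Weyl group of length `i`. -/
def weylRankSize (Φ : RootSys n) (i : ℕ) : ℕ :=
  Set.ncard {u : Esp n ≃ₗᵢ[ℝ] Esp n | u ∈ Φ.weylGroup ∧ Φ.len u = i}

end RootSys

namespace RootSys

variable {n : ℕ}

/-- `(w, Φ)` contains one of the type `A₃` patterns `3142` or `2413`: there is a
subsystem `Φ ∩ U` of type `A₃` with simple roots `a, b, c` (in this order) on which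
the inversion set of `w` restricts to the inversion set of `3142` (namely
`{a, c, a+b+c}`) or of `2413` (namely `{b, a+b, b+c}`). -/
def ContainsA3Pattern (Φ : RootSys n) (w : Esp n ≃ₗᵢ[ℝ] Esp n) : Prop :=
  ∃ (U : Submodule ℝ (Esp n)) (a b c : Esp n),
    LinearIndependent ℝ ![a, b, c] ∧
    Φ.pos.filter (fun β => β ∈ U) = ({a, b, c, a + b, b + c, a + b + c} : Finset (Esp n)) ∧
    ((Φ.invSet w).filter (fun β => β ∈ U) = ({b, a + b, b + c} : Finset (Esp n)) ∨
      (Φ.invSet w).filter (fun β => β ∈ U) = ({a, c, a + b + c} : Finset (Esp n)))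

/-- `(w, Φ)` contains one of the two type `B₂` patterns whose inversion sets have
size two: there is a subsystem `Φ ∩ U` of type `B₂` on which the inversion set of
`w` restricts to a set of size two. -/
def ContainsB2Pattern (Φ : RootSys n) (w : Esp n ≃ₗᵢ[ℝ] Esp n) : Prop :=
  ∃ (U : Submodule ℝ (Esp n)) (p q : Esp n),
    LinearIndependent ℝ ![p, q] ∧
    Φ.pos.filter (fun β => β ∈ U) = ({p, q, p + q, p + 2 • q} : Finset (Esp n)) ∧
    ((Φ.invSet w).filter (fun β => β ∈ U)).card = 2

/-- `(w, Φ)` contains one of the six type `G₂` patterns whose inversion sets have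
sizes two, three, or four. -/
def ContainsG2Pattern (Φ : RootSys n) (w : Esp n ≃ₗᵢ[ℝ] Esp n) : Prop :=
  ∃ (U : Submodule ℝ (Esp n)) (p q : Esp n),
    LinearIndependent ℝ ![p, q] ∧
    Φ.pos.filter (fun β => β ∈ U) =
      ({p, q, p + q, p + 2 • q, p + 3 • q, 2 • p + 3 • q} : Finset (Esp n)) ∧
    ((Φ.invSet w).filter (fun β => β ∈ U)).card ∈ ({2, 3, 4} : Set ℕ)

/-- A positive root is *small* if all its coefficients on the simple roots are `0` or `1`. -/
def IsSmall (Φ : RootSys n) (β : Esp n) : Prop :=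
  ∃ c : Esp n → ℝ, β = ∑ γ ∈ Φ.simples, c γ • γ ∧ ∀ γ ∈ Φ.simples, c γ = 0 ∨ c γ = 1

/-- The support of `β` (written `β = ∑ c γ • γ` over the simple roots) contains the
simple root `t`. -/
def SuppContains (Φ : RootSys n) (t β : Esp n) : Prop :=
  ∃ c : Esp n → ℝ, β = ∑ γ ∈ Φ.simples, c γ • γ ∧ c t ≠ 0

/-- The parabolic subgroup `W_J` generated by the reflections in the roots of `J`. -/
def parabolicSubgroup (J : Finset (Esp n)) : Subgroup (Esp n ≃ₗᵢ[ℝ] Esp n) :=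
  Subgroup.closure {g | ∃ α ∈ J, g = rootReflection α}

/-- `w` is a minimal-length coset representative of `w W_J`, i.e. `w ∈ W^J`. -/
def IsMinCosetRep (Φ : RootSys n) (J : Finset (Esp n)) (w : Esp n ≃ₗᵢ[ℝ] Esp n) : Prop :=
  w ∈ Φ.weylGroup ∧ ∀ u ∈ parabolicSubgroup (n := n) J, Φ.len w ≤ Φ.len (w * u)

/-- Biconvexity of a subset `A` of a set `P` of positive roots. -/
def IsBiconvexIn (P A : Finset (Esp n)) : Prop :=
  A ⊆ P ∧ (∀ a ∈ A, ∀ b ∈ A, a + b ∈ P → a + b ∈ A) ∧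
    (∀ a ∈ P, ∀ b ∈ P, a ∉ A → b ∉ A → a + b ∈ P → a + b ∉ A)

/-- The number of elements of `W(Φ)` of length `ℓ(w') + i` restricting to `w'` on the
subsystem `Φ'`. -/
def fiberRankSize (Φ Φ' : RootSys n) (w' : Esp n ≃ₗᵢ[ℝ] Esp n) (i : ℕ) : ℕ :=
  Set.ncard {w : Esp n ≃ₗᵢ[ℝ] Esp n |
    w ∈ Φ.weylGroup ∧ Φ'.IsRestriction w' Φ w ∧ Φ.len w = Φ'.len w' + i}

end RootSys

/-- Isomorphism of patterns: a linear map carrying the roots, positive roots, and the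
inversion set of the one pattern bijectively onto those of the other. -/
def PatternIso {m k : ℕ} (Ψ : RootSys m) (u : Esp m ≃ₗᵢ[ℝ] Esp m)
    (Ψ' : RootSys k) (u' : Esp k ≃ₗᵢ[ℝ] Esp k) : Prop :=
  ∃ f : Esp m →ₗ[ℝ] Esp k,
    Set.InjOn f (Ψ.roots : Set (Esp m)) ∧
    Ψ.roots.image ⇑f = Ψ'.roots ∧ Ψ.pos.image ⇑f = Ψ'.pos ∧
    (Ψ.invSet u).image ⇑f = Ψ'.invSet u'

/-- `(w, Φ)` contains a pattern isomorphic to `(u, Ψ)`: there is a subsystem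
`Φ ∩ U` of `Φ` on which `w` restricts to an element whose pattern is isomorphic
to `(u, Ψ)`. -/
def ContainsPatternGen {m k : ℕ} (Φ : RootSys m) (w : Esp m ≃ₗᵢ[ℝ] Esp m)
    (Ψ : RootSys k) (u : Esp k ≃ₗᵢ[ℝ] Esp k) : Prop :=
  ∃ (U : Submodule ℝ (Esp m)) (Ψ₀ : RootSys m) (u₀ : Esp m ≃ₗᵢ[ℝ] Esp m),
    Ψ₀.roots = Φ.roots.filter (fun β => β ∈ U) ∧
    Ψ₀.pos = Φ.pos.filter (fun β => β ∈ U) ∧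
    u₀ ∈ Ψ₀.weylGroup ∧ Ψ₀.invSet u₀ = (Φ.invSet w).filter (fun β => β ∈ U) ∧
    PatternIso Ψ₀ u₀ Ψ u

/-- The `i`-th standard basis vector of `ℝⁿ`. -/
def stdB (n : ℕ) (i : Fin n) : Esp n := EuclideanSpace.single i (1 : ℝ)

/-- The `i`-th simple root of the type `Bₙ` root system: `eᵢ - eᵢ₊₁` for `i < n-1`
and `eₙ₋₁` (the last standard basis vector) for `i = n-1`. -/
def bSimple (n : ℕ) (i : Fin n) : Esp n :=
  stdB n i - (if h : (i : ℕ) + 1 < n then stdB n ⟨(i : ℕ) + 1, h⟩ else 0)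

/-- The set of positive roots of the type `Bₙ` root system. -/
def typeBPos (n : ℕ) : Set (Esp n) :=
  {v | ∃ i j : Fin n, i < j ∧ (v = stdB n i - stdB n j ∨ v = stdB n i + stdB n j)} ∪
    {v | ∃ i : Fin n, v = stdB n i}

/-- The set of positive roots of the type `Cₙ` root system. -/
def typeCPos (n : ℕ) : Set (Esp n) :=
  {v | ∃ i j : Fin n, i < j ∧ (v = stdB n i - stdB n j ∨ v = stdB n i + stdB n j)} ∪
    {v | ∃ i : Fin n, v = 2 • stdB n i}

/-- The set of positive roots of the type `Aₙ` root system (in `ℝⁿ⁺¹`). -/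
def typeAPos (n : ℕ) : Set (Esp (n + 1)) :=
  {v | ∃ i j : Fin (n + 1), i < j ∧ v = stdB (n + 1) i - stdB (n + 1) j}

/-!
Separability is defined by recursion through restrictions to subsystems, and its only condition
on `w` itself, the pivot condition, is invariant under replacing `I(w)` by its complement in `Φ⁺`.
Since `I(w₀ w) = Φ⁺ ∖ I(w)`, and on a subsystem `Φ'` this complement is the inversion set of
`w₀' u`, where `u` is the restriction of `w` and `w₀'` the longest element of `Φ'`, induction on
separability proves the theorem. The input from root system theory is that every root system has
a longest element: an element of maximal length inverts every positive root, since right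
multiplication by `s_β` for a positive root `β` that is not inverted increases the length.
-/

open scoped RealInnerProductSpace

section Reflection

variable {n : ℕ}

lemma rootReflection_apply (β γ : Esp n) :
    rootReflection β γ = γ - (2 * ⟪β, γ⟫ / ⟪β, β⟫) • β := by
  rw [rootReflection, Submodule.reflection_orthogonal_apply,
    Submodule.reflection_singleton_apply, real_inner_self_eq_norm_sq]
  simp only [RCLike.ofReal_real_eq_id, id]
  module

lemma rootReflection_self (β : Esp n) : rootReflection β β = -β :=
  Submodule.reflection_orthogonalComplement_singleton_eq_neg β

lemma rootReflection_involutive (β : Esp n) : Function.Involutive (rootReflection β) :=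
  Submodule.reflection_involutive _

lemma rootReflection_map (w : Esp n ≃ₗᵢ[ℝ] Esp n) (β γ : Esp n) :
    rootReflection (w β) (w γ) = w (rootReflection β γ) := by
  simp only [rootReflection_apply, map_sub, map_smul, LinearIsometryEquiv.inner_map_map]

end Reflection

namespace RootSys

variable {n : ℕ} (Φ : RootSys n)

lemma neg_notMem_pos {α : Esp n} (h : α ∈ Φ.pos) : -α ∉ Φ.pos :=
  (Φ.pos_iff α (Φ.pos_subset h)).mp h

lemma mem_pos_of_neg_notMem {α : Esp n} (hα : α ∈ Φ.roots) (h : -α ∉ Φ.pos) : α ∈ Φ.pos :=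
  (Φ.pos_iff α hα).mpr h

lemma rootReflection_mem_weylGroup {α : Esp n} (hα : α ∈ Φ.roots) :
    rootReflection α ∈ Φ.weylGroup :=
  Subgroup.subset_closure ⟨α, hα, rfl⟩

variable {Φ}

lemma apply_mem_roots {w : Esp n ≃ₗᵢ[ℝ] Esp n} (hw : w ∈ Φ.weylGroup) {α : Esp n}
    (hα : α ∈ Φ.roots) : w α ∈ Φ.roots := by
  induction hw using Subgroup.closure_induction'' generalizing α with
  | mem _ hx => obtain ⟨β, hβ, rfl⟩ := hx; exact Φ.reflect_mem β hβ α hα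
  | inv_mem _ hx =>
    obtain ⟨β, hβ, rfl⟩ := hx
    rw [rootReflection, ← Submodule.reflection_inv]
    exact Φ.reflect_mem β hβ α hα
  | one => exact hα
  | mul _ _ _ _ hx hy => exact hx (hy hα)

lemma inner_self_pos {α : Esp n} (hα : α ∈ Φ.roots) : 0 < ⟪α, α⟫ :=
  real_inner_self_pos.mpr (Φ.ne_zero α hα)

lemma exists_rootReflection_eq {β γ : Esp n} (hβ : β ∈ Φ.roots) (hγ : γ ∈ Φ.roots) :
    ∃ c : ℤ, 2 * ⟪β, γ⟫ = c * ⟪β, β⟫ ∧ rootReflection β γ = γ - (c : ℝ) • β := by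
  obtain ⟨c, hc⟩ := Φ.crystal β hβ γ hγ
  refine ⟨c, ?_, by rw [rootReflection_apply, hc]⟩
  rw [← hc, div_mul_cancel₀ _ (Φ.inner_self_pos hβ).ne']

lemma inner_mul_inner_lt {β γ : Esp n} (hβ : β ∈ Φ.roots) (hγ : γ ∈ Φ.roots)
    (h₁ : γ ≠ β) (h₂ : γ ≠ -β) : ⟪β, γ⟫ * ⟪β, γ⟫ < ⟪β, β⟫ * ⟪γ, γ⟫ := by
  refine (real_inner_mul_inner_self_le β γ).lt_of_ne fun heq => ?_
  have hnorm : ‖⟪β, γ⟫‖ = ‖β‖ * ‖γ‖ := by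
    rw [Real.norm_eq_abs, ← sq_eq_sq₀ (abs_nonneg _) (by positivity), sq_abs, mul_pow,
      ← real_inner_self_eq_norm_sq, ← real_inner_self_eq_norm_sq, sq, heq]
  obtain ⟨r, -, rfl⟩ :=
    (norm_inner_eq_norm_iff (Φ.ne_zero β hβ) (Φ.ne_zero γ hγ)).mp hnorm
  rcases Φ.reduced β hβ r hγ with rfl | rfl
  · exact h₁ (one_smul ℝ β)
  · exact h₂ (neg_one_smul ℝ β)

lemma exists_pairings_of_inner_neg {β γ : Esp n} (hβ : β ∈ Φ.pos) (hγ : γ ∈ Φ.pos)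
    (hneg : ⟪β, γ⟫ < 0) :
    ∃ c d : ℤ, rootReflection β γ = γ - (c : ℝ) • β ∧ rootReflection γ β = β - (d : ℝ) • γ ∧
      c < 0 ∧ d < 0 ∧ c * d < 4 := by
  have hβr := Φ.pos_subset hβ
  have hγr := Φ.pos_subset hγ
  obtain ⟨c, hc, hsc⟩ := Φ.exists_rootReflection_eq hβr hγr
  obtain ⟨d, hd, hsd⟩ := Φ.exists_rootReflection_eq hγr hβr
  have hββ := Φ.inner_self_pos hβr
  have hγγ := Φ.inner_self_pos hγr
  rw [real_inner_comm] at hd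
  have hlt : ⟪β, γ⟫ * ⟪β, γ⟫ < ⟪β, β⟫ * ⟪γ, γ⟫ := by
    refine Φ.inner_mul_inner_lt hβr hγr (fun h => ?_) (fun h => ?_)
    · subst h; linarith
    · subst h; exact Φ.neg_notMem_pos hβ hγ
  have hc' : (c : ℝ) < 0 := by nlinarith
  have hd' : (d : ℝ) < 0 := by nlinarith
  refine ⟨c, d, hsc, hsd, by exact_mod_cast hc', by exact_mod_cast hd', ?_⟩
  have : (c * d : ℝ) * (⟪β, β⟫ * ⟪γ, γ⟫) < 4 * (⟪β, β⟫ * ⟪γ, γ⟫) := by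
    nlinarith
  exact_mod_cast lt_of_mul_lt_mul_right this (by positivity)

lemma add_mem_pos_of_inner_neg {β γ : Esp n} (hβ : β ∈ Φ.pos) (hγ : γ ∈ Φ.pos)
    (hneg : ⟪β, γ⟫ < 0) : γ + β ∈ Φ.pos := by
  obtain ⟨c, d, hsc, hsd, hc, hd, hcd⟩ := Φ.exists_pairings_of_inner_neg hβ hγ hneg
  refine Φ.pos_add γ hγ β hβ ?_
  have hc_or_hd : c = -1 ∨ d = -1 := by
    by_contra! h
    nlinarith [show c ≤ -2 by omega, show d ≤ -2 by omega]
  rcases hc_or_hd with rfl | rfl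
  · have := Φ.reflect_mem β (Φ.pos_subset hβ) γ (Φ.pos_subset hγ)
    rwa [hsc, Int.cast_neg, Int.cast_one, neg_one_smul, sub_neg_eq_add] at this
  · have := Φ.reflect_mem γ (Φ.pos_subset hγ) β (Φ.pos_subset hβ)
    rwa [hsd, Int.cast_neg, Int.cast_one, neg_one_smul, sub_neg_eq_add, add_comm] at this

/-- `s_β γ = γ + kβ` with `k ∈ {1, 2, 3}`; each partial sum `γ + jβ` is a root (for `j = 2`
because it is `s_β (γ + β)`), so positivity climbs the string by `pos_add`. -/
lemma rootReflection_mem_pos_of_inner_neg {β γ : Esp n} (hβ : β ∈ Φ.pos) (hγ : γ ∈ Φ.pos)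
    (hneg : ⟪β, γ⟫ < 0) : rootReflection β γ ∈ Φ.pos := by
  obtain ⟨c, d, hsc, -, hc, hd, hcd⟩ := Φ.exists_pairings_of_inner_neg hβ hγ hneg
  have hβr := Φ.pos_subset hβ
  have hsγ : rootReflection β γ ∈ Φ.roots := Φ.reflect_mem β hβr γ (Φ.pos_subset hγ)
  have h₁ : γ + β ∈ Φ.pos := Φ.add_mem_pos_of_inner_neg hβ hγ hneg
  have h3 : -3 ≤ c := by nlinarith
  interval_cases c
  · have h₂ : γ + β + β ∈ Φ.pos := by
      refine Φ.pos_add _ h₁ β hβ ?_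
      have := Φ.reflect_mem β hβr _ (Φ.pos_subset h₁)
      rwa [map_add, hsc, rootReflection_self,
        show γ - ((-3 : ℤ) : ℝ) • β + -β = γ + β + β by push_cast; module] at this
    rw [hsc, show γ - ((-3 : ℤ) : ℝ) • β = γ + β + β + β by push_cast; module] at hsγ ⊢
    exact Φ.pos_add _ h₂ β hβ hsγ
  · rw [hsc, show γ - ((-2 : ℤ) : ℝ) • β = γ + β + β by push_cast; module] at hsγ ⊢
    exact Φ.pos_add _ h₁ β hβ hsγ
  · rwa [hsc, show γ - ((-1 : ℤ) : ℝ) • β = γ + β by push_cast; module]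

lemma inner_pos_of_neg_rootReflection_mem_pos {β γ : Esp n} (hβ : β ∈ Φ.pos)
    (hγ : γ ∈ Φ.pos) (h : -rootReflection β γ ∈ Φ.pos) : 0 < ⟪β, γ⟫ := by
  by_contra! hle
  rcases hle.lt_or_eq with hlt | heq
  · exact Φ.neg_notMem_pos (Φ.rootReflection_mem_pos_of_inner_neg hβ hγ hlt) h
  · rw [rootReflection_apply, heq, mul_zero, zero_div, zero_smul, sub_zero] at h
    exact Φ.neg_notMem_pos hγ h

variable (Φ) in
def absRoot (x : Esp n) : Esp n := if x ∈ Φ.pos then x else -x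

lemma absRoot_of_mem_pos {x : Esp n} (hx : x ∈ Φ.pos) : Φ.absRoot x = x := if_pos hx

lemma absRoot_of_notMem_pos {x : Esp n} (hx : x ∉ Φ.pos) : Φ.absRoot x = -x := if_neg hx

lemma absRoot_mem_pos {x : Esp n} (hx : x ∈ Φ.roots) : Φ.absRoot x ∈ Φ.pos := by
  by_cases h : x ∈ Φ.pos
  · rwa [absRoot_of_mem_pos h]
  · rw [absRoot_of_notMem_pos h]
    exact Φ.mem_pos_of_neg_notMem (Φ.neg_mem x hx) (by rwa [neg_neg])

lemma absRoot_neg {x : Esp n} (hx : x ∈ Φ.roots) : Φ.absRoot (-x) = Φ.absRoot x := by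
  by_cases h : x ∈ Φ.pos
  · rw [absRoot_of_notMem_pos (Φ.neg_notMem_pos h), neg_neg, absRoot_of_mem_pos h]
  · rw [absRoot_of_notMem_pos h,
      absRoot_of_mem_pos (absRoot_of_notMem_pos h ▸ Φ.absRoot_mem_pos hx)]

lemma mem_invSet_iff {w : Esp n ≃ₗᵢ[ℝ] Esp n} {γ : Esp n} :
    γ ∈ Φ.invSet w ↔ γ ∈ Φ.pos ∧ -w γ ∈ Φ.pos :=
  Finset.mem_filter

lemma mem_invSet_mul_iff {w v : Esp n ≃ₗᵢ[ℝ] Esp n} (hw : w ∈ Φ.weylGroup)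
    (hv : v ∈ Φ.weylGroup) {γ : Esp n} (hγ : γ ∈ Φ.pos) :
    γ ∈ Φ.invSet (w * v) ↔ (γ ∈ Φ.invSet v ↔ Φ.absRoot (v γ) ∉ Φ.invSet w) := by
  have hvγ : v γ ∈ Φ.roots := apply_mem_roots hv (Φ.pos_subset hγ)
  have hwvγ : w (v γ) ∈ Φ.roots := apply_mem_roots hw hvγ
  simp only [mem_invSet_iff, hγ, true_and, LinearIsometryEquiv.coe_mul, Function.comp_apply]
  by_cases h : v γ ∈ Φ.pos
  · simp only [absRoot_of_mem_pos h, h, Φ.neg_notMem_pos h, true_and, false_iff, not_not]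
  · have h' : -v γ ∈ Φ.pos := Φ.mem_pos_of_neg_notMem (Φ.neg_mem _ hvγ) (by rwa [neg_neg])
    simp only [absRoot_of_notMem_pos h, h', map_neg, neg_neg, true_and, true_iff]
    exact ⟨fun h₁ h₂ => Φ.neg_notMem_pos h₂ h₁,
      fun h₁ => Φ.mem_pos_of_neg_notMem (Φ.neg_mem _ hwvγ) fun h₂ => h₁ (by rwa [neg_neg] at h₂)⟩

lemma invSet_longest_mul {w₀ w : Esp n ≃ₗᵢ[ℝ] Esp n} (h₀ : Φ.IsLongest w₀)
    (hw : w ∈ Φ.weylGroup) : Φ.invSet (w₀ * w) = Φ.pos \ Φ.invSet w := by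
  ext γ
  by_cases hγ : γ ∈ Φ.pos
  · have hw₀ : Φ.absRoot (w γ) ∈ Φ.invSet w₀ :=
      h₀.2 ▸ Φ.absRoot_mem_pos (apply_mem_roots hw (Φ.pos_subset hγ))
    simp [Φ.mem_invSet_mul_iff h₀.1 hw hγ, hγ, hw₀]
  · simp [mem_invSet_iff, hγ]

lemma invSet_subset_pos (w : Esp n ≃ₗᵢ[ℝ] Esp n) : Φ.invSet w ⊆ Φ.pos :=
  Finset.filter_subset _ _

lemma absRoot_apply_absRoot_apply {v : Esp n ≃ₗᵢ[ℝ] Esp n} (hinv : Function.Involutive v)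
    {γ : Esp n} (hγ : γ ∈ Φ.pos) : Φ.absRoot (v (Φ.absRoot (v γ))) = γ := by
  by_cases h : v γ ∈ Φ.pos
  · rw [absRoot_of_mem_pos h, hinv γ, absRoot_of_mem_pos hγ]
  · rw [absRoot_of_notMem_pos h, map_neg, hinv γ, absRoot_neg (Φ.pos_subset hγ),
      absRoot_of_mem_pos hγ]

lemma absRoot_apply_mem_invSet_iff {v : Esp n ≃ₗᵢ[ℝ] Esp n} (hv : v ∈ Φ.weylGroup)
    (hinv : Function.Involutive v) {γ : Esp n} (hγ : γ ∈ Φ.pos) :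
    Φ.absRoot (v γ) ∈ Φ.invSet v ↔ γ ∈ Φ.invSet v := by
  have hvγ : v γ ∈ Φ.roots := apply_mem_roots hv (Φ.pos_subset hγ)
  simp only [mem_invSet_iff, Φ.absRoot_mem_pos hvγ, hγ, true_and]
  by_cases h : v γ ∈ Φ.pos
  · simp only [absRoot_of_mem_pos h, hinv γ, Φ.neg_notMem_pos hγ, Φ.neg_notMem_pos h]
  · simp only [absRoot_of_notMem_pos h, map_neg, hinv γ, neg_neg, hγ, true_iff]
    exact Φ.mem_pos_of_neg_notMem (Φ.neg_mem _ hvγ) (by rwa [neg_neg])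

lemma absRoot_apply_mem_symmDiff_iff {w v : Esp n ≃ₗᵢ[ℝ] Esp n} (hw : w ∈ Φ.weylGroup)
    (hv : v ∈ Φ.weylGroup) (hinv : Function.Involutive v) {γ : Esp n} (hγ : γ ∈ Φ.pos) :
    Φ.absRoot (v γ) ∈ (Φ.invSet w \ Φ.invSet v) ∪ (Φ.invSet v \ Φ.invSet w) ↔
      γ ∈ Φ.invSet (w * v) := by
  have := Φ.absRoot_apply_mem_invSet_iff hv hinv hγ
  rw [Φ.mem_invSet_mul_iff hw hv hγ, Finset.mem_union, Finset.mem_sdiff, Finset.mem_sdiff]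
  tauto

-- `γ ↦ |v γ|` carries `I(w v)` bijectively onto the symmetric difference of `I(w)` and `I(v)`.
lemma len_mul_of_involutive {w v : Esp n ≃ₗᵢ[ℝ] Esp n} (hw : w ∈ Φ.weylGroup)
    (hv : v ∈ Φ.weylGroup) (hinv : Function.Involutive v) :
    Φ.len (w * v) = (Φ.invSet w \ Φ.invSet v).card + (Φ.invSet v \ Φ.invSet w).card := by
  have hsub : (Φ.invSet w \ Φ.invSet v) ∪ (Φ.invSet v \ Φ.invSet w) ⊆ Φ.pos :=
    Finset.union_subset (Finset.sdiff_subset.trans (Φ.invSet_subset_pos w))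
      (Finset.sdiff_subset.trans (Φ.invSet_subset_pos v))
  have hσ : ∀ γ ∈ Φ.pos, Φ.absRoot (v γ) ∈ Φ.pos := fun γ hγ =>
    Φ.absRoot_mem_pos (apply_mem_roots hv (Φ.pos_subset hγ))
  rw [len, ← Finset.card_union_of_disjoint disjoint_sdiff_sdiff]
  refine Finset.card_nbij' (fun γ => Φ.absRoot (v γ)) (fun γ => Φ.absRoot (v γ))
    (fun γ hγ => ?_) (fun γ hγ => ?_) (fun γ hγ => ?_) (fun γ hγ => ?_)
  · exact (Φ.absRoot_apply_mem_symmDiff_iff hw hv hinv (Φ.invSet_subset_pos _ hγ)).mpr hγ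
  · have hγ' := hsub hγ
    rwa [Finset.mem_coe, ← Φ.absRoot_apply_mem_symmDiff_iff hw hv hinv (hσ γ hγ'),
      Φ.absRoot_apply_absRoot_apply hinv hγ']
  · exact Φ.absRoot_apply_absRoot_apply hinv (Φ.invSet_subset_pos _ hγ)
  · exact Φ.absRoot_apply_absRoot_apply hinv (hsub hγ)

/-- A reflection `s_β` can send a positive root `γ` to a negative one only if `⟪β, γ⟫ > 0`;
applied to `s_β` and `γ`, and to `s_{w β}` and `-w γ`, this gives `⟪β, γ⟫ > 0 > ⟪β, γ⟫`. -/
lemma neg_rootReflection_notMem_invSet {w : Esp n ≃ₗᵢ[ℝ] Esp n} (hw : w ∈ Φ.weylGroup)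
    {β γ : Esp n} (hβ : β ∈ Φ.pos) (hβw : β ∉ Φ.invSet w) (hγw : γ ∈ Φ.invSet w)
    (hγβ : γ ∈ Φ.invSet (rootReflection β)) : -rootReflection β γ ∉ Φ.invSet w := by
  intro h
  rw [mem_invSet_iff] at hγw hγβ h
  have hwβ : w β ∈ Φ.pos := Φ.mem_pos_of_neg_notMem (apply_mem_roots hw (Φ.pos_subset hβ))
    fun h' => hβw (mem_invSet_iff.mpr ⟨hβ, h'⟩)
  have h₁ : 0 < ⟪β, γ⟫ := Φ.inner_pos_of_neg_rootReflection_mem_pos hβ hγw.1 hγβ.2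
  have h₂ : 0 < ⟪w β, -w γ⟫ := by
    refine Φ.inner_pos_of_neg_rootReflection_mem_pos hwβ hγw.2 ?_
    rw [map_neg, rootReflection_map, neg_neg]
    simpa only [map_neg, neg_neg] using h.2
  rw [inner_neg_right, LinearIsometryEquiv.inner_map_map] at h₂
  linarith

-- `γ ↦ |s_β γ|` injects `I(w) ∩ I(s_β)` into `I(s_β) ∖ I(w)`, and misses `β`.
lemma card_inter_lt_card_sdiff {w : Esp n ≃ₗᵢ[ℝ] Esp n} (hw : w ∈ Φ.weylGroup)
    {β : Esp n} (hβ : β ∈ Φ.pos) (hβw : β ∉ Φ.invSet w) :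
    (Φ.invSet w ∩ Φ.invSet (rootReflection β)).card <
      (Φ.invSet (rootReflection β) \ Φ.invSet w).card := by
  set s := rootReflection β
  have hs : s ∈ Φ.weylGroup := Φ.rootReflection_mem_weylGroup (Φ.pos_subset hβ)
  have hinv : Function.Involutive s := rootReflection_involutive β
  have hβs : β ∈ Φ.invSet s := by
    rw [mem_invSet_iff, rootReflection_self, neg_neg]
    exact ⟨hβ, hβ⟩
  have hσβ : Φ.absRoot (s β) = β := by
    rw [rootReflection_self, absRoot_neg (Φ.pos_subset hβ), absRoot_of_mem_pos hβ]
  have hmaps : ∀ γ ∈ Φ.invSet w ∩ Φ.invSet s,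
      Φ.absRoot (s γ) ∈ (Φ.invSet s \ Φ.invSet w).erase β := by
    intro γ hγ
    obtain ⟨hγw, hγs⟩ := Finset.mem_inter.mp hγ
    have hγ := Φ.invSet_subset_pos w hγw
    have hσγ : Φ.absRoot (s γ) = -s γ :=
      absRoot_of_notMem_pos fun h => Φ.neg_notMem_pos h (mem_invSet_iff.mp hγs).2
    refine Finset.mem_erase.mpr ⟨fun h => ?_, Finset.mem_sdiff.mpr ⟨?_, ?_⟩⟩
    · have : γ = β := by rw [← Φ.absRoot_apply_absRoot_apply hinv hγ, h, hσβ]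
      exact hβw (this ▸ hγw)
    · exact (Φ.absRoot_apply_mem_invSet_iff hs hinv hγ).mpr hγs
    · rw [hσγ]
      exact Φ.neg_rootReflection_notMem_invSet hw hβ hβw hγw hγs
  calc (Φ.invSet w ∩ Φ.invSet s).card ≤ ((Φ.invSet s \ Φ.invSet w).erase β).card := by
        refine Finset.card_le_card_of_injOn _ hmaps fun x hx y hy hxy => ?_
        have hx := Φ.invSet_subset_pos w (Finset.mem_inter.mp hx).1
        have hy := Φ.invSet_subset_pos w (Finset.mem_inter.mp hy).1
        rw [← Φ.absRoot_apply_absRoot_apply hinv hx, ← Φ.absRoot_apply_absRoot_apply hinv hy]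
        exact congrArg (fun z => Φ.absRoot (s z)) hxy
    _ < (Φ.invSet s \ Φ.invSet w).card :=
        Finset.card_erase_lt_of_mem (Finset.mem_sdiff.mpr ⟨hβs, hβw⟩)

lemma len_lt_mul_rootReflection {w : Esp n ≃ₗᵢ[ℝ] Esp n} (hw : w ∈ Φ.weylGroup)
    {β : Esp n} (hβ : β ∈ Φ.pos) (hβw : β ∉ Φ.invSet w) :
    Φ.len w < Φ.len (w * rootReflection β) := by
  rw [Φ.len_mul_of_involutive hw (Φ.rootReflection_mem_weylGroup (Φ.pos_subset hβ))
    (rootReflection_involutive β), len,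
    ← Finset.card_inter_add_card_sdiff (Φ.invSet w) (Φ.invSet (rootReflection β))]
  have := Φ.card_inter_lt_card_sdiff hw hβ hβw
  omega

variable (Φ) in
lemma exists_isLongest : ∃ w₀, Φ.IsLongest w₀ := by
  let P : ℕ → Prop := fun k => ∃ w ∈ Φ.weylGroup, Φ.len w = k
  have hlen : ∀ w, Φ.len w ≤ Φ.pos.card := fun w => Finset.card_le_card (Φ.invSet_subset_pos w)
  obtain ⟨w₀, hw₀, hmax⟩ : P (Nat.findGreatest P Φ.pos.card) :=
    Nat.findGreatest_spec (hlen 1) ⟨1, one_mem _, rfl⟩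
  refine ⟨w₀, hw₀, (Φ.invSet_subset_pos w₀).antisymm fun β hβ => ?_⟩
  by_contra hβw
  have hlt := Φ.len_lt_mul_rootReflection hw₀ hβ hβw
  have hle := Nat.le_findGreatest (P := P) (hlen _)
    ⟨_, mul_mem hw₀ (Φ.rootReflection_mem_weylGroup (Φ.pos_subset hβ)), rfl⟩
  omega

lemma IsRestriction.longest_mul {Φ' : RootSys n} {u w v z : Esp n ≃ₗᵢ[ℝ] Esp n}
    (hsub : Φ'.pos ⊆ Φ.pos) (hres : Φ'.IsRestriction u Φ w) (hz : Φ'.IsLongest z)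
    (hv : Φ.invSet v = Φ.pos \ Φ.invSet w) : Φ'.IsRestriction (z * u) Φ v := by
  refine ⟨mul_mem hz.1 hres.1, ?_⟩
  rw [Φ'.invSet_longest_mul hz hres.1, hres.2, hv]
  ext γ
  simp only [Finset.mem_sdiff, Finset.mem_inter]
  constructor
  · rintro ⟨hγ', hγ⟩
    exact ⟨⟨hsub hγ', fun h => hγ ⟨h, hγ'⟩⟩, hγ'⟩
  · rintro ⟨⟨-, hγ⟩, hγ'⟩
    exact ⟨hγ', fun h => hγ h.1⟩

end RootSys

namespace Separable

lemma mem_weylGroup {n : ℕ} {Φ : RootSys n} {w : Esp n ≃ₗᵢ[ℝ] Esp n} (h : Separable Φ w) :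
    w ∈ Φ.weylGroup := by
  cases h <;> assumption

lemma of_invSet_eq_sdiff {n : ℕ} {Φ : RootSys n} {w v : Esp n ≃ₗᵢ[ℝ] Esp n}
    (hsep : Separable Φ w) (hv : v ∈ Φ.weylGroup) (hvw : Φ.invSet v = Φ.pos \ Φ.invSet w) :
    Separable Φ v := by
  induction hsep generalizing v with
  | rank_one Φ w _ hrk => exact rank_one Φ v hv hrk
  | reducible Φ Φ₁ Φ₂ w u₁ u₂ _ hd h₁ h₂ _ _ ih₁ ih₂ =>
    obtain ⟨z₁, hz₁⟩ := Φ₁.exists_isLongest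
    obtain ⟨z₂, hz₂⟩ := Φ₂.exists_isLongest
    have hpos : Φ.pos = Φ₁.pos ∪ Φ₂.pos := hd.2.2.2.2
    exact reducible Φ Φ₁ Φ₂ v (z₁ * u₁) (z₂ * u₂) hv hd
      (h₁.longest_mul (hpos ▸ Finset.subset_union_left) hz₁ hvw)
      (h₂.longest_mul (hpos ▸ Finset.subset_union_right) hz₂ hvw)
      (ih₁ (mul_mem hz₁.1 h₁.1) (Φ₁.invSet_longest_mul hz₁ h₁.1))
      (ih₂ (mul_mem hz₂.1 h₂.1) (Φ₂.invSet_longest_mul hz₂ h₂.1))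
  | pivot Φ Φ' w u α _ hirr hα hpar hres _ hcond ih =>
    obtain ⟨z, hz⟩ := Φ'.exists_isLongest
    have hsub : Φ'.pos ⊆ Φ.pos := hpar.2 ▸ Finset.filter_subset _ _
    have hupper : Φ.upperRoots α ⊆ Φ.pos := Finset.filter_subset _ _
    refine pivot Φ Φ' v (z * u) α hv hirr hα hpar (hres.longest_mul hsub hz hvw)
      (ih (mul_mem hz.1 hres.1) (Φ'.invSet_longest_mul hz hres.1)) ?_
    rw [hvw]
    rcases hcond with h | h
    · exact Or.inr fun β hβ hβv => (Finset.mem_sdiff.mp hβv).2 (h hβ)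
    · exact Or.inl fun β hβ => Finset.mem_sdiff.mpr ⟨hupper hβ, h β hβ⟩

end Separable

/-- **Proposition.** If `w` is separable and `w₀` is the longest element of `W(Φ)`,
then `w₀ · w` is also separable. -/
theorem separable_w0_mul {n : ℕ} (Φ : RootSys n) (w w₀ : Esp n ≃ₗᵢ[ℝ] Esp n)
    (hsep : Separable Φ w) (h₀ : Φ.IsLongest w₀) :
    Separable Φ (w₀ * w) :=
  hsep.of_invSet_eq_sdiff (mul_mem h₀.1 hsep.mem_weylGroup)
    (Φ.invSet_longest_mul h₀ hsep.mem_weylGroup)
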